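/- Let S_n^p be the tree formed by attaching n pairwise disjoint copies of D_{n-1}^p (a path on p vertices with n−1 extra leaves at one end) at a common central vertex (identifying the free end of each copy with the center). Then def(S_{n-1}^p) = n² − 3n + 1 for n ≥ 4 and odd p ≥ 1. -/

import Mathlib

/-!
Call the distance of a vertex from the centre its level; all leaves of a copy have level `p`.
Adjacent vertices have consecutive levels and `p` is odd, so the vertices of even level below `p`
form a vertex cover `C`, and every matching saturates at most `2 |C| = N (p - 1) + 2` vertices.
The bound is attained by pairing each vertex of `C` with its neighbour one level up along one
fixed branch and one level down along all the others. Hence `S_N^p` has deficiency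
`1 + N (p - 1) + N (N - 1) - (N (p - 1) + 2) = N (N - 1) - 1`, i.e. `n² - 3n + 1` for `N = n - 1`.
-/

open SimpleGraph

/-- The deficiency of a graph: number of vertices left unsaturated by a maximum matching. -/
noncomputable def deficiency {V : Type*} (G : SimpleGraph V) : ℕ :=
  Nat.card V - sSup {n | ∃ M : G.Subgraph, M.IsMatching ∧ M.verts.ncard = n}

/-- `S_n^p`: `n` pairwise disjoint copies of `D_{n-1}^p` (a path on `p` vertices with
`n-1` extra leaves at one end) with their free ends identified at a common center.
The center is path position `0` of every copy; `Sum.inr (i, Sum.inl j)` is path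
position `j+1` of copy `i`, and the `n-1` leaves of copy `i` are attached at path
position `p-1`. -/
def snpGraph (n p : ℕ) : SimpleGraph (Unit ⊕ Fin n × (Fin (p - 1) ⊕ Fin (n - 1))) :=
  SimpleGraph.fromRel (fun a b =>
    match a, b with
    | Sum.inl _, Sum.inr (_, Sum.inl j) => (j : ℕ) = 0
    | Sum.inl _, Sum.inr (_, Sum.inr _) => p = 1
    | Sum.inr (i, Sum.inl j), Sum.inr (i', Sum.inl j') => i = i' ∧ (j : ℕ) + 1 = (j' : ℕ)
    | Sum.inr (i, Sum.inl j), Sum.inr (i', Sum.inr _) => i = i' ∧ (j : ℕ) + 2 = p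
    | _, _ => False)

open Finset

namespace SimpleGraph

variable {V : Type*} {G : SimpleGraph V}

theorem Subgraph.IsMatching.ncard_verts_le_two_mul {M : G.Subgraph} (hM : M.IsMatching)
    {C : Set V} (hC : G.IsVertexCover C) (hfin : C.Finite) :
    M.verts.ncard ≤ 2 * C.ncard := by
  classical
  let partner : V → V := fun v => if hv : v ∈ M.verts then (hM hv).choose else v
  have hpartner : ∀ {v w}, M.Adj v w → partner v = w := fun {v w} h => by
    have hv := M.edge_vert h
    simpa only [partner, dif_pos hv] using hM.eq_of_adj_left (hM hv).choose_spec.1 h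
  have hsub : M.verts ⊆ C ∪ partner '' C := by
    intro v hv
    obtain ⟨w, hvw, -⟩ := hM hv
    rcases hC (M.adj_sub hvw) with hvC | hwC
    · exact Or.inl hvC
    · exact Or.inr ⟨w, hwC, hpartner hvw.symm⟩
  calc M.verts.ncard ≤ (C ∪ partner '' C).ncard :=
        Set.ncard_le_ncard hsub (hfin.union (hfin.image _))
    _ ≤ C.ncard + (partner '' C).ncard := Set.ncard_union_le _ _
    _ ≤ 2 * C.ncard := by linarith [Set.ncard_image_le (f := partner) hfin]

theorem deficiency_eq_of_isVertexCover [Finite V] {C : Set V} (hC : G.IsVertexCover C)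
    {σ : V → V} (hσ : Set.InjOn σ C) (hdisj : Disjoint C (σ '' C))
    (hadj : ∀ v ∈ C, G.Adj v (σ v)) :
    deficiency G = Nat.card V - 2 * C.ncard := by
  obtain ⟨M, hMverts, hM⟩ := Subgraph.IsMatching.exists_of_disjoint_sets_of_equiv hdisj
    (Equiv.Set.imageOfInjOn σ C hσ) (fun v => hadj v v.2)
  have hmax : IsGreatest {n | ∃ M : G.Subgraph, M.IsMatching ∧ M.verts.ncard = n}
      (2 * C.ncard) := by
    refine ⟨⟨M, hM, ?_⟩, ?_⟩
    · rw [hMverts, Set.ncard_union_eq hdisj, hσ.ncard_image, two_mul]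
    · rintro _ ⟨M', hM', rfl⟩
      exact hM'.ncard_verts_le_two_mul hC C.toFinite
  rw [deficiency, hmax.csSup_eq]

end SimpleGraph

theorem Finset.card_filter_odd_range_two_mul (m : ℕ) : #{j ∈ range (2 * m) | Odd j} = m := by
  induction m with
  | zero => rfl
  | succ m ih =>
    rw [show 2 * (m + 1) = 2 * m + 1 + 1 by ring, Finset.range_add_one, Finset.range_add_one,
      Finset.filter_insert, Finset.filter_insert, if_pos (odd_two_mul_add_one m),
      if_neg (by simp), Finset.card_insert_of_notMem (by simp), ih]

abbrev SnpVertex (N p : ℕ) := Unit ⊕ Fin N × (Fin (p - 1) ⊕ Fin (N - 1))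

namespace snpGraph

variable {N p : ℕ}

def level : SnpVertex N p → ℕ
  | .inl _ => 0
  | .inr (_, .inl j) => j + 1
  | .inr (_, .inr _) => p

lemma level_le (v : SnpVertex N p) : level v ≤ p := by
  rcases v with _ | ⟨_, j | _⟩ <;> simp only [level] <;> omega

lemma level_add_one_eq_or_of_adj {u v : SnpVertex N p} (h : (snpGraph N p).Adj u v) :
    level u + 1 = level v ∨ level v + 1 = level u := by
  rcases u with _ | ⟨i, j | k⟩ <;> rcases v with _ | ⟨i', j' | k'⟩ <;>
    simp [snpGraph, level] at h ⊢ <;> omega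

def cover : Set (SnpVertex N p) := {v | Even (level v) ∧ level v < p}

lemma isVertexCover_cover (hp : Odd p) : (snpGraph N p).IsVertexCover cover := by
  intro u v h
  have := level_add_one_eq_or_of_adj h
  have := level_le u
  have := level_le v
  simp only [cover, Set.mem_ofPred_eq, Nat.even_iff]
  rw [Nat.odd_iff] at hp
  omega

lemma two_mul_ncard_cover (hp : Odd p) :
    2 * (cover : Set (SnpVertex N p)).ncard = N * (p - 1) + 2 := by
  obtain ⟨m, rfl⟩ := hp
  have hodd : #{j : Fin (2 * m + 1 - 1) | Odd (j : ℕ)} = m := by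
    rw [card_filter, Fin.sum_univ_eq_sum_range (fun j => if Odd j then 1 else 0),
      ← Finset.card_filter, Nat.add_sub_cancel, Finset.card_filter_odd_range_two_mul]
  have hbranch : ∀ i : Fin N, #{j : Fin (2 * m + 1 - 1) |
      Even (level (.inr (i, .inl j) : SnpVertex N (2 * m + 1))) ∧
        level (.inr (i, .inl j) : SnpVertex N (2 * m + 1)) < 2 * m + 1} = m := fun i => by
    refine Eq.trans (congrArg Finset.card (Finset.filter_congr fun j _ => ?_)) hodd
    simp only [level, Nat.even_add_one, Nat.not_even_iff_odd, and_iff_left_iff_imp]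
    omega
  rw [cover, Set.ncard_eq_toFinset_card', Set.toFinset_ofPred, Finset.card_filter]
  simp only [Fintype.sum_sum_type, Fintype.sum_prod_type]
  simp only [Finset.sum_boole, hbranch]
  simp [level, mul_add, mul_left_comm, add_comm]

variable (i₀ : Fin N) (k₀ : Fin (N - 1))

def branchVertex (i : Fin N) (q : ℕ) : SnpVertex N p :=
  if q = 0 then .inl ()
  else if h : q - 1 < p - 1 then .inr (i, .inl ⟨q - 1, h⟩)
  else .inr (i, .inr k₀)

-- One step outward along branch `i₀`, ending in its leaf `k₀`, and one step inward along the
-- other branches: every vertex of `cover` gets its own partner outside `cover`.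
def partner : SnpVertex N p → SnpVertex N p
  | .inl _ => branchVertex k₀ i₀ 1
  | .inr (i, .inl j) => branchVertex k₀ i (if i = i₀ then j + 2 else j)
  | v@(.inr (_, .inr _)) => v

variable {i₀ k₀}

lemma branchVertex_succ (i : Fin N) (j : Fin (p - 1)) :
    (branchVertex k₀ i (j + 1) : SnpVertex N p) = .inr (i, .inl j) := by
  simp [branchVertex]

lemma level_branchVertex {i : Fin N} {q : ℕ} (hq : q ≤ p) :
    level (branchVertex k₀ i q : SnpVertex N p) = q := by
  unfold branchVertex
  split_ifs <;> simp only [level] <;> omega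

lemma eq_of_branchVertex_eq {i i' : Fin N} {q q' : ℕ} (hq : 0 < q) (hq' : 0 < q')
    (hqp : q ≤ p) (hqp' : q' ≤ p)
    (h : (branchVertex k₀ i q : SnpVertex N p) = branchVertex k₀ i' q') :
    i = i' ∧ q = q' := by
  unfold branchVertex at h
  split_ifs at h <;> simp [Fin.ext_iff] at h <;> omega

lemma adj_branchVertex_succ {i : Fin N} {q : ℕ} (hq : q < p) :
    (snpGraph N p).Adj (branchVertex k₀ i q) (branchVertex k₀ i (q + 1)) := by
  unfold branchVertex
  split_ifs <;> simp_all [snpGraph] <;> omega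

lemma exists_branchVertex_of_mem_cover {v : SnpVertex N p} (hv : v ∈ cover) :
    ∃ i q r, v = branchVertex k₀ i q ∧ partner i₀ k₀ v = branchVertex k₀ i r ∧
      Even q ∧ q < p ∧ (i = i₀ ∧ r = q + 1 ∨ i ≠ i₀ ∧ q = r + 1) := by
  obtain ⟨heven, hlt⟩ := hv
  rcases v with _ | ⟨i, j | k⟩
  · exact ⟨i₀, 0, 1, rfl, rfl, heven, hlt, .inl ⟨rfl, rfl⟩⟩
  · by_cases hi : i = i₀
    · exact ⟨i, j + 1, j + 2, (branchVertex_succ i j).symm, by simp [partner, hi], heven, hlt,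
        .inl ⟨hi, rfl⟩⟩
    · exact ⟨i, j + 1, j, (branchVertex_succ i j).symm, by simp [partner, hi], heven, hlt,
        .inr ⟨hi, rfl⟩⟩
  · exact absurd hlt (lt_irrefl p)

lemma adj_partner {v : SnpVertex N p} (hv : v ∈ cover) :
    (snpGraph N p).Adj v (partner i₀ k₀ v) := by
  obtain ⟨i, q, r, rfl, hpartner, -, hqp, ⟨-, rfl⟩ | ⟨-, rfl⟩⟩ :=
    exists_branchVertex_of_mem_cover (i₀ := i₀) (k₀ := k₀) hv
  · exact hpartner ▸ adj_branchVertex_succ hqp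
  · exact hpartner ▸ (adj_branchVertex_succ (by omega)).symm

lemma partner_notMem_cover {v : SnpVertex N p} (hv : v ∈ cover) :
    partner i₀ k₀ v ∉ cover := by
  obtain ⟨i, q, r, rfl, hpartner, hqe, hqp, hqr⟩ :=
    exists_branchVertex_of_mem_cover (i₀ := i₀) (k₀ := k₀) hv
  have hr : r = q + 1 ∨ q = r + 1 := hqr.imp And.right And.right
  rintro ⟨hre, -⟩
  rw [hpartner, level_branchVertex (by omega)] at hre
  rw [Nat.even_iff] at hqe hre
  omega

lemma injOn_partner : Set.InjOn (partner i₀ k₀ : SnpVertex N p → SnpVertex N p) cover := by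
  intro v hv w hw h
  obtain ⟨i, q, r, rfl, hv, hqe, hqp, hqr⟩ :=
    exists_branchVertex_of_mem_cover (i₀ := i₀) (k₀ := k₀) hv
  obtain ⟨i', q', r', rfl, hw, hqe', hqp', hqr'⟩ :=
    exists_branchVertex_of_mem_cover (i₀ := i₀) (k₀ := k₀) hw
  have hr : r = q + 1 ∨ q = r + 1 := hqr.imp And.right And.right
  have hr' : r' = q' + 1 ∨ q' = r' + 1 := hqr'.imp And.right And.right
  rw [Nat.even_iff] at hqe hqe'
  obtain ⟨rfl, rfl⟩ :=
    eq_of_branchVertex_eq (by omega) (by omega) (by omega) (by omega) (hv ▸ hw ▸ h)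
  have hqq' : q = q' := by
    rcases hqr with ⟨hi, _⟩ | ⟨hi, _⟩ <;> rcases hqr' with ⟨hi', _⟩ | ⟨hi', _⟩
    · omega
    · exact absurd hi hi'
    · exact absurd hi' hi
    · omega
  rw [hqq']

end snpGraph

theorem deficiency_snpGraph {N p : ℕ} (hN : 2 ≤ N) (hp : Odd p) :
    deficiency (snpGraph N p) = N * (N - 1) - 1 := by
  let i₀ : Fin N := ⟨0, by omega⟩
  let k₀ : Fin (N - 1) := ⟨0, by omega⟩
  have hdisj : Disjoint snpGraph.cover
      (snpGraph.partner i₀ k₀ '' (snpGraph.cover : Set (SnpVertex N p))) :=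
    Set.disjoint_right.mpr fun _ ⟨_, hv, hw⟩ => hw ▸ snpGraph.partner_notMem_cover hv
  rw [deficiency_eq_of_isVertexCover (snpGraph.isVertexCover_cover hp) snpGraph.injOn_partner
    hdisj (fun _ => snpGraph.adj_partner), snpGraph.two_mul_ncard_cover hp]
  simp only [Nat.card_eq_fintype_card, Fintype.card_sum, Fintype.card_prod, Fintype.card_fin,
    Fintype.card_unit]
  rw [Nat.mul_add]
  omega

theorem stmt_15 (n p : ℕ) (hn : 4 ≤ n) (hp : Odd p) :
    deficiency (snpGraph (n - 1) p) = n ^ 2 - 3 * n + 1 := by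
  rw [deficiency_snpGraph (by omega) hp]
  obtain ⟨m, rfl⟩ := Nat.exists_eq_add_of_le' hn
  rw [show m + 4 - 1 - 1 = m + 2 by omega, show m + 4 - 1 = m + 3 by omega,
    show (m + 4) ^ 2 = m * m + 8 * m + 16 by ring,
    show (m + 3) * (m + 2) = m * m + 5 * m + 6 by ring]
  omega
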